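/- Let a, â, s, ŝ, t, t̂ be positive reals with |a − â| < ζ, |s − ŝ| < τζ, |t − t̂| < τζ, with a ≤ 1, s, t ≥ τα and ŝ, t̂ ≥ τ(α − ζ), where 0 < ζ < α and τ > 0. Then |a/(√s·√t) − â/(√ŝ·√t̂)| < ζ/(2τ(α−ζ)²) + ζ/(τ(α−ζ)) + ζ/(2τ(α−ζ)²). -/
import Mathlib

/-- Key helper: difference of inverse square roots. -/
lemma inv_sqrt_diff_le (x y c d : ℝ) (hc : 0 < c) (hx : c ≤ x) (hy : c ≤ y)
    (hd : |x - y| ≤ d) :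
    |1 / Real.sqrt x - 1 / Real.sqrt y| ≤ d / (2 * c * Real.sqrt c) := by
  have hx0 : 0 < x := hc.trans_le hx
  have hy0 : 0 < y := hc.trans_le hy
  have hsx : 0 < Real.sqrt x := Real.sqrt_pos.mpr hx0
  have hsy : 0 < Real.sqrt y := Real.sqrt_pos.mpr hy0
  have hsc : 0 < Real.sqrt c := Real.sqrt_pos.mpr hc
  have hscx : Real.sqrt c ≤ Real.sqrt x := Real.sqrt_le_sqrt hx
  have hscy : Real.sqrt c ≤ Real.sqrt y := Real.sqrt_le_sqrt hy
  have hxx : Real.sqrt x * Real.sqrt x = x := Real.mul_self_sqrt hx0.le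
  have hyy : Real.sqrt y * Real.sqrt y = y := Real.mul_self_sqrt hy0.le
  have hcc : Real.sqrt c * Real.sqrt c = c := Real.mul_self_sqrt hc.le
  have key : 1 / Real.sqrt x - 1 / Real.sqrt y
      = (y - x) / (Real.sqrt x * Real.sqrt y * (Real.sqrt x + Real.sqrt y)) := by
    rw [div_sub_div _ _ hsx.ne' hsy.ne',
      div_eq_div_iff (by positivity) (by positivity)]
    linear_combination Real.sqrt x * Real.sqrt y * hyy - Real.sqrt x * Real.sqrt y * hxx
  rw [key, abs_div,
    abs_of_pos (show (0:ℝ) < Real.sqrt x * Real.sqrt y * (Real.sqrt x + Real.sqrt y)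
      by positivity)]
  have h1 : |y - x| ≤ d := by rw [abs_sub_comm]; exact hd
  have h2 : 2 * c * Real.sqrt c ≤ Real.sqrt x * Real.sqrt y * (Real.sqrt x + Real.sqrt y) := by
    nlinarith [mul_le_mul hscx hscy hsc.le hsx.le]
  exact div_le_div₀ (le_trans (abs_nonneg _) h1) h1 (by positivity) h2

theorem laplacian_entry_perturbation (a ahat s shat t that ζ τ α : ℝ)
    (ha : 0 < a) (hahat : 0 < ahat) (hs : 0 < s) (hshat : 0 < shat)
    (ht : 0 < t) (hthat : 0 < that)
    (hζ : 0 < ζ) (hζα : ζ < α) (hτ : 0 < τ)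
    (haerr : |a - ahat| < ζ) (hserr : |s - shat| < τ * ζ) (hterr : |t - that| < τ * ζ)
    (ha1 : a ≤ 1) (hsl : τ * α ≤ s) (htl : τ * α ≤ t)
    (hshatl : τ * (α - ζ) ≤ shat) (hthatl : τ * (α - ζ) ≤ that) :
    |a / (Real.sqrt s * Real.sqrt t) - ahat / (Real.sqrt shat * Real.sqrt that)|
      < ζ / (2 * τ * (α - ζ) ^ 2) + ζ / (τ * (α - ζ)) + ζ / (2 * τ * (α - ζ) ^ 2) := by
  set A := α - ζ with hAdef
  have hA : 0 < A := by rw [hAdef]; linarith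
  set c := τ * A with hcdef
  have hc : 0 < c := by rw [hcdef]; positivity
  set sc := Real.sqrt c with hscdef
  have hsc : 0 < sc := Real.sqrt_pos.mpr hc
  have hcc : sc * sc = c := Real.mul_self_sqrt hc.le
  have hcs : c ≤ s := le_trans (by rw [hcdef, hAdef]; nlinarith) hsl
  have hct : c ≤ t := le_trans (by rw [hcdef, hAdef]; nlinarith) htl
  have hcsh : c ≤ shat := hshatl
  have hcth : c ≤ that := hthatl
  set ss := Real.sqrt s with hssdef
  set st := Real.sqrt t with hstdef
  set ssh := Real.sqrt shat with hsshdef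
  set sth := Real.sqrt that with hsthdef
  have hss : 0 < ss := Real.sqrt_pos.mpr hs
  have hst : 0 < st := Real.sqrt_pos.mpr ht
  have hssh : 0 < ssh := Real.sqrt_pos.mpr hshat
  have hsth : 0 < sth := Real.sqrt_pos.mpr hthat
  have hscss : sc ≤ ss := Real.sqrt_le_sqrt hcs
  have hscst : sc ≤ st := Real.sqrt_le_sqrt hct
  have hscssh : sc ≤ ssh := Real.sqrt_le_sqrt hcsh
  have hscsth : sc ≤ sth := Real.sqrt_le_sqrt hcth
  have hD1 : |1 / ss - 1 / ssh| ≤ τ * ζ / (2 * c * sc) :=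
    inv_sqrt_diff_le s shat c (τ * ζ) hc hcs hcsh hserr.le
  have hD2 : |1 / st - 1 / sth| ≤ τ * ζ / (2 * c * sc) :=
    inv_sqrt_diff_le t that c (τ * ζ) hc hct hcth hterr.le
  clear_value ss st ssh sth sc c A
  clear hssdef hstdef hsshdef hsthdef hscdef
  -- decomposition
  have hdec : a / (ss * st) - ahat / (ssh * sth)
      = (a / st) * (1 / ss - 1 / ssh) + (a / ssh) * (1 / st - 1 / sth)
        + (a - ahat) / (ssh * sth) := by
    field_simp
    ring
  have h2cs : 2 * c * sc * sc = 2 * τ ^ 2 * A ^ 2 := by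
    linear_combination 2 * c * hcc + 2 * (c + τ * A) * hcdef
  have hB : τ * ζ / (2 * c * sc) * (1 / sc) = ζ / (2 * τ * A ^ 2) := by
    rw [div_mul_div_comm, mul_one, h2cs,
      div_eq_div_iff (by positivity) (by positivity)]
    ring
  have hfrac1 : a / st ≤ 1 / sc := div_le_div₀ zero_le_one ha1 hsc hscst
  have hfrac2 : a / ssh ≤ 1 / sc := div_le_div₀ zero_le_one ha1 hsc hscssh
  have ht1 : |(a / st) * (1 / ss - 1 / ssh)| ≤ ζ / (2 * τ * A ^ 2) := by
    rw [abs_mul, abs_of_pos (by positivity : (0:ℝ) < a / st)]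
    calc a / st * |1 / ss - 1 / ssh| ≤ (τ * ζ / (2 * c * sc)) * (1 / sc) := by
          rw [mul_comm]
          exact mul_le_mul hD1 hfrac1 (by positivity) (by positivity)
      _ = ζ / (2 * τ * A ^ 2) := hB
  have ht2 : |(a / ssh) * (1 / st - 1 / sth)| ≤ ζ / (2 * τ * A ^ 2) := by
    rw [abs_mul, abs_of_pos (by positivity : (0:ℝ) < a / ssh)]
    calc a / ssh * |1 / st - 1 / sth| ≤ (τ * ζ / (2 * c * sc)) * (1 / sc) := by
          rw [mul_comm]
          exact mul_le_mul hD2 hfrac2 (by positivity) (by positivity)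
      _ = ζ / (2 * τ * A ^ 2) := hB
  have hdenl : c ≤ ssh * sth := by
    rw [← hcc]; exact mul_le_mul hscssh hscsth hsc.le hssh.le
  have ht3 : |(a - ahat) / (ssh * sth)| < ζ / c := by
    rw [abs_div, abs_of_pos (by positivity : (0:ℝ) < ssh * sth)]
    calc |a - ahat| / (ssh * sth) ≤ |a - ahat| / c :=
          div_le_div₀ (abs_nonneg _) le_rfl hc hdenl
      _ < ζ / c := (div_lt_div_iff_of_pos_right hc).mpr haerr
  calc |a / (ss * st) - ahat / (ssh * sth)|
      ≤ |(a / st) * (1 / ss - 1 / ssh)| + |(a / ssh) * (1 / st - 1 / sth)|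
        + |(a - ahat) / (ssh * sth)| := by rw [hdec]; exact abs_add_three _ _ _
    _ < ζ / (2 * τ * A ^ 2) + ζ / c + ζ / (2 * τ * A ^ 2) := by linarith
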